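/- Let z = x + iy be a complex number with y ≠ 0 or x² ≤ 1, let r₁ = |z−1|, r₂ = |z+1|, α = (r₁+r₂)/2, β = (r₂−r₁)/2, and let S(z) = arcsin(β) + i·sign(y)·arcosh(α). Then sin(S(z)) = z, where sin is the complex sine function. -/

import Mathlib

open Complex

/-- Real inverse hyperbolic cosine, `arcosh t = ln (t + √(t²-1))`. -/
noncomputable def arcosh (t : ℝ) : ℝ := Real.log (t + Real.sqrt (t ^ 2 - 1))

/-- `α(w) = (|w-1| + |w+1|)/2`. -/
noncomputable def alpha (w : ℂ) : ℝ := (‖w - 1‖ + ‖w + 1‖) / 2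

/-- `β(w) = (|w+1| - |w-1|)/2`. -/
noncomputable def beta (w : ℂ) : ℝ := (‖w + 1‖ - ‖w - 1‖) / 2

/-- Principal branch `S(w)` of the inverse sine on the cut plane
`ℂ ∖ ((-∞,-1) ∪ (1,∞))`. -/
noncomputable def S (w : ℂ) : ℂ :=
  (Real.arcsin (beta w) : ℝ) + Complex.I * (Real.sign w.im : ℝ) * (arcosh (alpha w) : ℝ)

/-!
Write `S z = a + b i` with `a = arcsin β` and `b = sign(y) arcosh α`, so that
`sin (S z) = sin a cosh b + i cos a sinh b = β cosh b + i √(1 - β²) sinh b`.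
The elliptic-coordinate identities `αβ = x` and `(1 - β²)(α² - 1) = y²` finish the proof
once `cosh b = α`; for `y ≠ 0` this is `cosh_arcosh`, and on the segment `[-1, 1]` both
sides are `1`.
-/

theorem arcosh_eq_real_arcosh : arcosh = Real.arcosh := rfl

theorem Real.sign_mul_abs (y : ℝ) : Real.sign y * |y| = y := by
  rcases lt_trichotomy y 0 with hy | rfl | hy
  · rw [Real.sign_of_neg hy, abs_of_neg hy]; ring
  · simp
  · rw [Real.sign_of_pos hy, abs_of_pos hy, one_mul]

theorem Real.cosh_sign_mul {y : ℝ} (hy : y ≠ 0) (t : ℝ) :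
    Real.cosh (Real.sign y * t) = Real.cosh t := by
  rcases Real.sign_apply_eq_of_ne_zero y hy with h | h <;> simp [h]

theorem Real.sinh_sign_mul (y t : ℝ) :
    Real.sinh (Real.sign y * t) = Real.sign y * Real.sinh t := by
  rcases Real.sign_apply_eq y with h | h | h <;> simp [h]

theorem Complex.sin_ofReal_add_ofReal_mul_I (a b : ℝ) :
    sin (a + b * I) = ↑(Real.sin a * Real.cosh b) + ↑(Real.cos a * Real.sinh b) * I := by
  rw [sin_add_mul_I, ← ofReal_sin, ← ofReal_cos, ← ofReal_cosh, ← ofReal_sinh]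
  push_cast
  ring

theorem S_eq (w : ℂ) :
    S w = ↑(Real.arcsin (beta w)) + ↑(Real.sign w.im * arcosh (alpha w)) * I := by
  rw [S]
  push_cast
  ring

theorem norm_sub_one_sq (w : ℂ) : ‖w - 1‖ ^ 2 = (w.re - 1) ^ 2 + w.im ^ 2 := by
  rw [Complex.sq_norm, Complex.normSq_apply]
  simp [sq]

theorem norm_add_one_sq (w : ℂ) : ‖w + 1‖ ^ 2 = (w.re + 1) ^ 2 + w.im ^ 2 := by
  rw [Complex.sq_norm, Complex.normSq_apply]
  simp [sq]

theorem one_le_alpha (w : ℂ) : 1 ≤ alpha w := by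
  have h := norm_sub_le (w + 1) (w - 1)
  rw [show w + 1 - (w - 1) = 2 by ring, norm_ofNat] at h
  rw [alpha]
  linarith

theorem abs_beta_le_one (w : ℂ) : |beta w| ≤ 1 := by
  have h := abs_norm_sub_norm_le (w + 1) (w - 1)
  rw [show w + 1 - (w - 1) = 2 by ring, norm_ofNat] at h
  rw [beta, abs_div, abs_two]
  linarith

theorem alpha_mul_beta (w : ℂ) : alpha w * beta w = w.re := by
  rw [alpha, beta]
  linear_combination (norm_add_one_sq w - norm_sub_one_sq w) / 4

theorem one_sub_beta_sq_mul_alpha_sq_sub_one (w : ℂ) :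
    (1 - beta w ^ 2) * (alpha w ^ 2 - 1) = w.im ^ 2 := by
  set p := ‖w - 1‖
  set q := ‖w + 1‖
  set P := (w.re - 1) ^ 2 + w.im ^ 2
  set Q := (w.re + 1) ^ 2 + w.im ^ 2
  have hp : p ^ 2 = P := norm_sub_one_sq w
  have hq : q ^ 2 = Q := norm_add_one_sq w
  rw [alpha, beta]
  -- `16 · lhs = 4 p² q² - (p² + q² - 4)²`, a quadratic polynomial in `p²` and `q²`
  linear_combination ((4 * Q - (p ^ 2 + q ^ 2 + P + Q - 8)) * hp
    + (4 * p ^ 2 - (p ^ 2 + q ^ 2 + P + Q - 8)) * hq) / 16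

theorem alpha_eq_one_of_im_eq_zero {w : ℂ} (him : w.im = 0) (hre : w.re ^ 2 ≤ 1) :
    alpha w = 1 := by
  obtain ⟨hlo, hhi⟩ := abs_le.mp (sq_le_one_iff_abs_le_one w.re |>.mp hre)
  have hw : w = (w.re : ℂ) := Complex.ext rfl (by simp [him])
  rw [alpha, hw, ← ofReal_one, ← ofReal_sub, ← ofReal_add, norm_real, norm_real,
    Real.norm_of_nonpos (by linarith), Real.norm_of_nonneg (by linarith)]
  ring

theorem cosh_sign_im_mul_arcosh_alpha {w : ℂ} (h : w.im ≠ 0 ∨ w.re ^ 2 ≤ 1) :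
    Real.cosh (Real.sign w.im * arcosh (alpha w)) = alpha w := by
  rcases eq_or_ne w.im 0 with him | him
  · rw [him, Real.sign_zero, zero_mul, Real.cosh_zero,
      alpha_eq_one_of_im_eq_zero him (h.resolve_left (not_not_intro him))]
  · rw [Real.cosh_sign_mul him, arcosh_eq_real_arcosh, Real.cosh_arcosh (one_le_alpha w)]

theorem stmt9 (z : ℂ) (h : z.im ≠ 0 ∨ z.re ^ 2 ≤ 1) : Complex.sin (S z) = z := by
  have hβ := abs_beta_le_one z
  obtain ⟨hβ₁, hβ₂⟩ := abs_le.mp hβ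
  have hre : Real.sin (Real.arcsin (beta z)) * Real.cosh (Real.sign z.im * arcosh (alpha z))
      = z.re := by
    rw [Real.sin_arcsin hβ₁ hβ₂, cosh_sign_im_mul_arcosh_alpha h, mul_comm, alpha_mul_beta]
  have him : Real.cos (Real.arcsin (beta z)) * Real.sinh (Real.sign z.im * arcosh (alpha z))
      = z.im := by
    rw [Real.cos_arcsin, Real.sinh_sign_mul, arcosh_eq_real_arcosh,
      Real.sinh_arcosh (one_le_alpha z), mul_left_comm,
      ← Real.sqrt_mul (sub_nonneg.mpr ((sq_le_one_iff_abs_le_one _).mpr hβ)),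
      one_sub_beta_sq_mul_alpha_sq_sub_one,
      Real.sqrt_sq_eq_abs, Real.sign_mul_abs]
  rw [S_eq, sin_ofReal_add_ofReal_mul_I, hre, him, re_add_im]
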